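/- arXiv:quant-ph/0605213 — 2 statements merged into one kernel-verified Lean document; each statement's English description precedes it below -/
import Mathlib

section
/- For every POVM {E_α} (a finite family of positive semidefinite operators with Σ_α E_α = 1) on a finite-dimensional complex Hilbert space and any two density matrices ρ0, ρ1, the fidelity satisfies F(ρ0, ρ1) ≤ Σ_α √( tr(ρ0 E_α) · tr(ρ1 E_α) ); i.e., the fidelity is a lower bound for the Bhattacharyya overlap of the outcome distributions p_i(α) = tr(ρ_i E_α) of any POVM measurement. -/
open Matrix Kronecker
open scoped ComplexOrder

-- Positive semidefinite square root (zero if not PSD).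
open Classical in
noncomputable def psqrt {n : Type*} [Fintype n] [DecidableEq n] (A : Matrix n n ℂ) :
    Matrix n n ℂ :=
  if h : A.PosSemidef then
    (h.1.eigenvectorUnitary : Matrix n n ℂ) * diagonal (((↑) : ℝ → ℂ) ∘ Real.sqrt ∘ h.1.eigenvalues) *
      (star h.1.eigenvectorUnitary : Matrix n n ℂ)
  else 0

/-- Fidelity F(ρ0,ρ1) = tr √(√ρ0 ρ1 √ρ0). -/
noncomputable def fidelity {n : Type*} [Fintype n] [DecidableEq n] (ρ0 ρ1 : Matrix n n ℂ) : ℝ :=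
  (psqrt (psqrt ρ0 * ρ1 * psqrt ρ0)).trace.re

/-- Operator (ℓ²→ℓ²) norm of a matrix. -/
noncomputable def opNorm {n : Type*} [Fintype n] [DecidableEq n] (A : Matrix n n ℂ) : ℝ :=
  ‖LinearMap.toContinuousLinearMap (Matrix.toEuclideanLin A)‖

/-- Partial trace over the right (second) factor. -/
noncomputable def ptraceRight {m n : Type*} [Fintype m] [Fintype n]
    (ρ : Matrix (m × n) (m × n) ℂ) : Matrix m m ℂ :=
  Matrix.of fun i j => ∑ k, ρ (i, k) (j, k)

/-- Partial trace over the left (first) factor. -/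
noncomputable def ptraceLeft {m n : Type*} [Fintype m] [Fintype n]
    (ρ : Matrix (m × n) (m × n) ℂ) : Matrix n n ℂ :=
  Matrix.of fun i j => ∑ k, ρ (k, i) (k, j)

/-!
Write `A = √ρ0`, `B = √ρ1` and `M = B A`, so that `F(ρ0, ρ1) = tr √(Mᴴ M)`. By polar decomposition
there is a contraction `W` with `W M = √(Mᴴ M)`. Inserting `∑ α, E α = 1` between `B` and `A`
splits `tr (W M)` into the terms `tr (W B E_α A) = tr (Xᴴ W Y)` with `X = A √E_α`, `Y = B √E_α`,
and the Cauchy–Schwarz inequality for the Hilbert–Schmidt inner product, together with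
`W Wᴴ ≤ 1`, bounds each of them by `√(tr (ρ0 E_α) · tr (ρ1 E_α))`.
-/

namespace Matrix

open scoped MatrixOrder

variable {n : Type*} [Fintype n]

lemma re_trace_conjTranspose_mul_le (X Y : Matrix n n ℂ) :
    (Xᴴ * Y).trace.re ≤ √(Xᴴ * X).trace.re * √(Yᴴ * Y).trace.re := by
  let vec (Z : Matrix n n ℂ) : EuclideanSpace ℂ (n × n) := WithLp.toLp 2 fun p => Z p.2 p.1
  have hinner (Z Z' : Matrix n n ℂ) : inner ℂ (vec Z) (vec Z') = (Zᴴ * Z').trace := by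
    simp [vec, trace, mul_apply, PiLp.inner_apply, Fintype.sum_prod_type, mul_comm]
  have hnorm (Z : Matrix n n ℂ) : ‖vec Z‖ = √(Zᴴ * Z).trace.re := by
    rw [norm_eq_sqrt_re_inner (𝕜 := ℂ), hinner]; rfl
  rw [← hinner, ← hnorm, ← hnorm]
  exact re_inner_le_norm (𝕜 := ℂ) (vec X) (vec Y)

variable [DecidableEq n]

lemma PosSemidef.psqrt_eq_sqrt {A : Matrix n n ℂ} (hA : A.PosSemidef) :
    psqrt A = CFC.sqrt A := by
  rw [CFC.sqrt_eq_real_sqrt A hA.nonneg, cfcₙ_eq_cfc, hA.1.cfc_eq, IsHermitian.cfc,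
    Unitary.conjStarAlgAut_apply, psqrt, dif_pos hA]
  rfl

lemma PosSemidef.conjTranspose_psqrt {A : Matrix n n ℂ} (hA : A.PosSemidef) :
    (psqrt A)ᴴ = psqrt A := by
  rw [hA.psqrt_eq_sqrt]
  exact (CFC.sqrt_nonneg A).isSelfAdjoint

lemma PosSemidef.psqrt_mul_self {A : Matrix n n ℂ} (hA : A.PosSemidef) :
    psqrt A * psqrt A = A := by
  rw [hA.psqrt_eq_sqrt, CFC.sqrt_mul_sqrt_self A hA.nonneg]

lemma re_trace_conjTranspose_mul_mul_le {W : Matrix n n ℂ} (hW : W * Wᴴ ≤ 1) (X Y : Matrix n n ℂ) :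
    (Xᴴ * W * Y).trace.re ≤ √(Xᴴ * X).trace.re * √(Yᴴ * Y).trace.re := by
  have hX : ((Wᴴ * X)ᴴ * (Wᴴ * X)).trace.re ≤ (Xᴴ * X).trace.re := by
    have h := (le_iff.mp (star_left_conjugate_le_conjugate hW X)).trace_nonneg
    rw [Complex.nonneg_iff] at h
    simp only [star_eq_conjTranspose, conjTranspose_mul, conjTranspose_conjTranspose,
      trace_sub, Complex.sub_re, mul_one, mul_assoc] at h ⊢
    linarith [h.1]
  calc (Xᴴ * W * Y).trace.re = ((Wᴴ * X)ᴴ * Y).trace.re := by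
        rw [conjTranspose_mul, conjTranspose_conjTranspose]
    _ ≤ √((Wᴴ * X)ᴴ * (Wᴴ * X)).trace.re * √(Yᴴ * Y).trace.re :=
        re_trace_conjTranspose_mul_le _ _
    _ ≤ √(Xᴴ * X).trace.re * √(Yᴴ * Y).trace.re := by gcongr

lemma exists_mul_conjTranspose_le_one_mul_eq_psqrt (M : Matrix n n ℂ) :
    ∃ W : Matrix n n ℂ, W * Wᴴ ≤ 1 ∧ W * M = psqrt (Mᴴ * M) := by
  set H := Mᴴ * M
  have hH : H.PosSemidef := posSemidef_conjTranspose_mul_self M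
  have hcont (f : ℝ → ℝ) : ContinuousOn f (spectrum ℝ H) :=
    H.finite_real_spectrum.continuousOn f
  -- Since `(0 : ℝ)⁻¹ = 0`, `P` is the pseudo-inverse of `√H`.
  set P := cfc (fun x => (√x)⁻¹) H
  have hPH : P * H = cfc Real.sqrt H := by
    conv_lhs => rw [← cfc_id' ℝ H]
    rw [← cfc_mul _ _ H (hcont _) (hcont _)]
    exact cfc_congr fun x _ => by rw [← div_eq_inv_mul, Real.div_sqrt]
  refine ⟨P * Mᴴ, ?_, ?_⟩
  · have hP : Pᴴ = P := (cfc_predicate _ H : IsSelfAdjoint P)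
    rw [conjTranspose_mul, conjTranspose_conjTranspose, hP,
      show P * Mᴴ * (M * P) = P * H * P by simp only [H, mul_assoc], hPH,
      ← cfc_mul _ _ H (hcont _) (hcont _)]
    exact cfc_le_one _ _ fun x _ => mul_inv_le_one (a := √x)
  · rw [mul_assoc, hPH, hH.psqrt_eq_sqrt, CFC.sqrt_eq_real_sqrt H hH.nonneg, cfcₙ_eq_cfc]

lemma trace_conjTranspose_mul_self_psqrt_mul_psqrt {ρ E : Matrix n n ℂ} (hρ : ρ.PosSemidef)
    (hE : E.PosSemidef) :
    ((psqrt ρ * psqrt E)ᴴ * (psqrt ρ * psqrt E)).trace = (ρ * E).trace := by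
  rw [conjTranspose_mul, hρ.conjTranspose_psqrt, hE.conjTranspose_psqrt, trace_mul_comm,
    mul_assoc, ← mul_assoc (psqrt E), hE.psqrt_mul_self, trace_mul_comm, mul_assoc,
    hρ.psqrt_mul_self, trace_mul_comm]

lemma re_trace_mul_psqrt_mul_mul_psqrt_le {W ρ₀ ρ₁ E : Matrix n n ℂ} (hW : W * Wᴴ ≤ 1)
    (h₀ : ρ₀.PosSemidef) (h₁ : ρ₁.PosSemidef) (hE : E.PosSemidef) :
    (W * psqrt ρ₁ * E * psqrt ρ₀).trace.re ≤ √((ρ₀ * E).trace.re * (ρ₁ * E).trace.re) := by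
  set X := psqrt ρ₀ * psqrt E
  set Y := psqrt ρ₁ * psqrt E
  have hXY : (W * psqrt ρ₁ * E * psqrt ρ₀).trace = (Xᴴ * W * Y).trace := by
    rw [mul_assoc Xᴴ, trace_mul_comm Xᴴ, conjTranspose_mul, h₀.conjTranspose_psqrt,
      hE.conjTranspose_psqrt]
    conv_lhs => rw [← hE.psqrt_mul_self]
    simp only [Y, mul_assoc]
  have hX := trace_conjTranspose_mul_self_psqrt_mul_psqrt h₀ hE
  have hX₀ : 0 ≤ (ρ₀ * E).trace.re := by
    rw [← hX]
    exact (Complex.nonneg_iff.mp (posSemidef_conjTranspose_mul_self X).trace_nonneg).1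
  rw [hXY, Real.sqrt_mul hX₀, ← hX, ← trace_conjTranspose_mul_self_psqrt_mul_psqrt h₁ hE]
  exact re_trace_conjTranspose_mul_mul_le hW X Y

end Matrix

theorem fidelity_le_povm_overlap_general {n : Type*} [Fintype n] [DecidableEq n]
    (ρ0 ρ1 : Matrix n n ℂ) (h0 : ρ0.PosSemidef)
    (h1 : ρ1.PosSemidef)
    (k : ℕ) (E : Fin k → Matrix n n ℂ)
    (hE : ∀ α, (E α).PosSemidef) (hEsum : ∑ α, E α = 1) :
    fidelity ρ0 ρ1 ≤ ∑ α, Real.sqrt ((ρ0 * E α).trace.re * (ρ1 * E α).trace.re) := by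
  set M := psqrt ρ1 * psqrt ρ0
  have hM : Mᴴ * M = psqrt ρ0 * ρ1 * psqrt ρ0 := by
    rw [conjTranspose_mul, h0.conjTranspose_psqrt, h1.conjTranspose_psqrt, mul_assoc,
      ← mul_assoc (psqrt ρ1), h1.psqrt_mul_self, mul_assoc]
  obtain ⟨W, hW, hWM⟩ := exists_mul_conjTranspose_le_one_mul_eq_psqrt M
  calc fidelity ρ0 ρ1 = (W * M).trace.re := by rw [fidelity, hWM, hM]
    _ = ∑ α, (W * psqrt ρ1 * E α * psqrt ρ0).trace.re := by
        rw [← Complex.re_sum, ← trace_sum, ← Finset.sum_mul, ← Finset.mul_sum, hEsum, mul_one,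
          mul_assoc]
    _ ≤ _ := Finset.sum_le_sum fun α _ => re_trace_mul_psqrt_mul_mul_psqrt_le hW h0 h1 (hE α)

/-- The fidelity is a lower bound for the Bhattacharyya overlap of the
outcome distributions of any POVM measurement. -/
theorem fidelity_le_povm_overlap {n : Type*} [Fintype n] [DecidableEq n]
    (ρ0 ρ1 : Matrix n n ℂ) (h0 : ρ0.PosSemidef) (h0t : ρ0.trace = 1)
    (h1 : ρ1.PosSemidef) (h1t : ρ1.trace = 1)
    (k : ℕ) (E : Fin k → Matrix n n ℂ)
    (hE : ∀ α, (E α).PosSemidef) (hEsum : ∑ α, E α = 1) :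
    fidelity ρ0 ρ1 ≤ ∑ α, Real.sqrt ((ρ0 * E α).trace.re * (ρ1 * E α).trace.re) :=
  fidelity_le_povm_overlap_general ρ0 ρ1 h0 h1 k E hE hEsum
end

section
/- (Monotonicity of fidelity under partial trace.) Let H_A and H_E be finite-dimensional complex Hilbert spaces and let ρ0, ρ1 be density matrices on H_A ⊗ H_E. Then F(ρ0^A, ρ1^A) ≥ F(ρ0, ρ1), where ρ_i^A denotes the partial trace of ρ_i over H_E; i.e., taking the partial trace does not decrease the fidelity. -/
/-!
Fidelity is the value of a semidefinite program:
`F(A, B) = max { Re tr X : [A, X; Xᴴ, B] ≥ 0 }`.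
Block positivity means exactly `X = √A K √B` for a contraction `K`, and with the polar
decomposition `√B √A = W |√B √A|` one gets `Re tr (√A K √B) ≤ tr |√B √A| = F(A, B)`, with
equality for `K = Wᴴ`. Applied blockwise, the partial trace is a sum of compressions, so it keeps
the block matrix positive and preserves `tr X`: an optimal `X` for `ρ0, ρ1` is feasible for the
reduced states.
-/

open Matrix Kronecker
open scoped ComplexOrder

open scoped MatrixOrder Matrix.Norms.L2Operator

namespace Matrix

theorem conjTranspose_cfcSqrt {l : Type*} [Fintype l] [DecidableEq l] (A : Matrix l l ℂ) :
    (CFC.sqrt A)ᴴ = CFC.sqrt A :=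
  (CFC.sqrt_nonneg A).isSelfAdjoint

theorem exists_polar_decomposition {k l : Type*} [Fintype k] [Fintype l] [DecidableEq l]
    (T : Matrix k l ℂ) :
    ∃ V : Matrix k l ℂ, ‖V‖ ≤ 1 ∧ V * CFC.sqrt (Tᴴ * T) = T ∧
      Vᴴ * V * CFC.sqrt (Tᴴ * T) = CFC.sqrt (Tᴴ * T) := by
  set H := Tᴴ * T
  have hH : 0 ≤ H := (posSemidef_conjTranspose_mul_self T).nonneg
  have hmul (f g : ℝ → ℝ) : cfc f H * cfc g H = cfc (fun t => f t * g t) H :=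
    (cfc_mul f g H (H.finite_real_spectrum.continuousOn f)
      (H.finite_real_spectrum.continuousOn g)).symm
  have hsq {t : ℝ} (ht : t ∈ spectrum ℝ H) : √t * √t = t :=
    Real.mul_self_sqrt (spectrum_nonneg_of_nonneg hH ht)
  -- `G` is the Moore–Penrose inverse of `|T|`, and `E` the projection onto its range.
  set G := cfc (fun t => (√t)⁻¹) H
  set E := cfc (fun t => √t * (√t)⁻¹) H
  have hsqrt : CFC.sqrt H = cfc Real.sqrt H := by rw [CFC.sqrt_eq_real_sqrt H, cfcₙ_eq_cfc]
  have hGG : Gᴴ = G := (cfc_predicate _ H : IsSelfAdjoint G)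
  have hEE : Eᴴ = E := (cfc_predicate _ H : IsSelfAdjoint E)
  have hGP : G * CFC.sqrt H = E := by
    rw [hsqrt, hmul]
    exact cfc_congr fun t _ => mul_comm _ _
  have hVV : (T * G)ᴴ * (T * G) = E := by
    rw [conjTranspose_mul, hGG, Matrix.mul_assoc, ← Matrix.mul_assoc Tᴴ, ← Matrix.mul_assoc,
      show G * H * G = G * cfc (fun t => t) H * G by rw [cfc_id' ℝ H], hmul, hmul]
    refine cfc_congr fun t ht => ?_
    nth_rw 2 [← hsq ht]
    rcases eq_or_ne √t 0 with h | h <;> field_simp [h]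
  have hTE : T * E = T := by
    suffices (T * (1 - E))ᴴ * (T * (1 - E)) = 0 by
      rwa [conjTranspose_mul_self_eq_zero, Matrix.mul_sub, Matrix.mul_one, sub_eq_zero,
        eq_comm] at this
    have hE : 1 - E = cfc (fun t => 1 - √t * (√t)⁻¹) H := by
      rw [cfc_sub _ _ H (H.finite_real_spectrum.continuousOn _)
        (H.finite_real_spectrum.continuousOn _), cfc_const_one ℝ H]
    rw [conjTranspose_mul, Matrix.mul_assoc, ← Matrix.mul_assoc Tᴴ, conjTranspose_sub,
      conjTranspose_one, hEE, ← Matrix.mul_assoc]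
    change (1 - E) * H * (1 - E) = 0
    rw [← cfc_id' ℝ H, hE, hmul, hmul, ← cfc_zero ℝ H]
    refine cfc_congr fun t ht => ?_
    nth_rw 3 [← hsq ht]
    rcases eq_or_ne √t 0 with h | h <;> simp [h]
  refine ⟨T * G, ?_, by rw [Matrix.mul_assoc, hGP, hTE], ?_⟩
  · have h : ‖T * G‖ * ‖T * G‖ ≤ 1 := by
      rw [← l2_opNorm_conjTranspose_mul_self, hVV]
      refine norm_cfc_le zero_le_one fun t _ => ?_
      rcases eq_or_ne √t 0 with h | h <;> simp [h]
    nlinarith [norm_nonneg (T * G)]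
  · rw [hVV, hsqrt, hmul]
    exact cfc_congr fun t _ => mul_inv_mul_cancel √t

variable {l : Type*} [Fintype l] [DecidableEq l]

theorem posSemidef_fromBlocks_one_of_norm_le_one {K : Matrix l l ℂ} (hK : ‖K‖ ≤ 1) :
    (fromBlocks 1 K Kᴴ 1).PosSemidef := by
  have : ‖Kᴴ * K‖ ≤ 1 := by
    rw [l2_opNorm_conjTranspose_mul_self]
    nlinarith [norm_nonneg K]
  have := (CStarAlgebra.norm_le_one_iff_of_nonneg _
    (posSemidef_conjTranspose_mul_self K).nonneg).mp this
  let _ := invertibleOne (α := Matrix l l ℂ)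
  rwa [PosDef.fromBlocks₁₁ K 1 PosDef.one, inv_one, Matrix.mul_one, ← Matrix.le_iff]

theorem posSemidef_fromBlocks_sqrt_mul_mul_sqrt {A B K : Matrix l l ℂ}
    (hA : A.PosSemidef) (hB : B.PosSemidef) (hK : ‖K‖ ≤ 1) :
    (fromBlocks A (CFC.sqrt A * K * CFC.sqrt B) (CFC.sqrt A * K * CFC.sqrt B)ᴴ B).PosSemidef := by
  convert (posSemidef_fromBlocks_one_of_norm_le_one hK).conjTranspose_mul_mul_same
    (fromBlocks (CFC.sqrt A) 0 0 (CFC.sqrt B)) using 1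
  simp [fromBlocks_conjTranspose, fromBlocks_multiply, conjTranspose_cfcSqrt, conjTranspose_mul,
    CFC.sqrt_mul_sqrt_self A hA.nonneg, CFC.sqrt_mul_sqrt_self B hB.nonneg, Matrix.mul_assoc]

theorem PosSemidef.two_mul_re_trace_le {A B X : Matrix l l ℂ}
    (h : (fromBlocks A X Xᴴ B).PosSemidef) : 2 * X.trace.re ≤ A.trace.re + B.trace.re := by
  have := (h.conjTranspose_mul_mul_same (fromRows (1 : Matrix l l ℂ) (-1))).trace_nonneg
  simp only [conjTranspose_fromRows_eq_fromCols_conjTranspose, fromCols_mul_fromBlocks,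
    fromCols_mul_fromRows, conjTranspose_one, conjTranspose_neg] at this
  have hre := (Complex.le_def.mp this).1
  simp [trace_conjTranspose] at hre
  linarith

theorem PosSemidef.exists_eq_sqrt_mul_mul_sqrt {A B X : Matrix l l ℂ}
    (h : (fromBlocks A X Xᴴ B).PosSemidef) :
    ∃ K : Matrix l l ℂ, ‖K‖ ≤ 1 ∧ X = CFC.sqrt A * K * CFC.sqrt B := by
  set S := CFC.sqrt (fromBlocks A X Xᴴ B)
  have hcols (i j : l → l ⊕ l) :
      (S.submatrix id i)ᴴ * S.submatrix id j = (fromBlocks A X Xᴴ B).submatrix i j := by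
    rw [conjTranspose_submatrix, ← submatrix_mul _ _ _ _ _ Function.bijective_id,
      conjTranspose_cfcSqrt, CFC.sqrt_mul_sqrt_self _ h.nonneg]
  have hSA : (S.submatrix id Sum.inl)ᴴ * S.submatrix id Sum.inl = A := hcols _ _
  have hSB : (S.submatrix id Sum.inr)ᴴ * S.submatrix id Sum.inr = B := hcols _ _
  have hSX : (S.submatrix id Sum.inl)ᴴ * S.submatrix id Sum.inr = X := hcols _ _
  obtain ⟨V₁, hV₁, hV₁S, -⟩ := exists_polar_decomposition (S.submatrix id Sum.inl)
  obtain ⟨V₂, hV₂, hV₂S, -⟩ := exists_polar_decomposition (S.submatrix id Sum.inr)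
  rw [hSA] at hV₁S
  rw [hSB] at hV₂S
  refine ⟨V₁ᴴ * V₂, ?_, ?_⟩
  · calc ‖V₁ᴴ * V₂‖ ≤ ‖V₁ᴴ‖ * ‖V₂‖ := l2_opNorm_mul _ _
      _ ≤ 1 := by rw [l2_opNorm_conjTranspose]; nlinarith [norm_nonneg V₁, norm_nonneg V₂]
  · rw [← hSX, ← hV₁S, ← hV₂S, conjTranspose_mul, conjTranspose_cfcSqrt]
    simp only [Matrix.mul_assoc]

end Matrix

section Fidelity

variable {l : Type*} [Fintype l] [DecidableEq l]

theorem psqrt_eq_cfcSqrt {A : Matrix l l ℂ} (hA : A.PosSemidef) : psqrt A = CFC.sqrt A := by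
  rw [CFC.sqrt_eq_real_sqrt A hA.nonneg, cfcₙ_eq_cfc, hA.1.cfc_eq, IsHermitian.cfc,
    Unitary.conjStarAlgAut_apply, psqrt, dif_pos hA]
  rfl

theorem fidelity_eq_re_trace_sqrt {A B : Matrix l l ℂ} (hA : A.PosSemidef) (hB : B.PosSemidef) :
    fidelity A B =
      (CFC.sqrt ((CFC.sqrt B * CFC.sqrt A)ᴴ * (CFC.sqrt B * CFC.sqrt A))).trace.re := by
  have hT : (CFC.sqrt B * CFC.sqrt A)ᴴ * (CFC.sqrt B * CFC.sqrt A) =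
      CFC.sqrt A * B * CFC.sqrt A := by
    rw [conjTranspose_mul, conjTranspose_cfcSqrt, conjTranspose_cfcSqrt, Matrix.mul_assoc,
      ← Matrix.mul_assoc (CFC.sqrt B), CFC.sqrt_mul_sqrt_self B hB.nonneg, Matrix.mul_assoc]
  rw [fidelity, hT, psqrt_eq_cfcSqrt hA, psqrt_eq_cfcSqrt]
  simpa [conjTranspose_cfcSqrt] using hB.conjTranspose_mul_mul_same (CFC.sqrt A)

theorem re_trace_sqrt_mul_mul_sqrt_le_fidelity {A B K : Matrix l l ℂ}
    (hA : A.PosSemidef) (hB : B.PosSemidef) (hK : ‖K‖ ≤ 1) :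
    (CFC.sqrt A * K * CFC.sqrt B).trace.re ≤ fidelity A B := by
  set T := CFC.sqrt B * CFC.sqrt A
  obtain ⟨W, hW, hWT, -⟩ := exists_polar_decomposition T
  set P := CFC.sqrt (Tᴴ * T)
  have hP : P.PosSemidef := (CFC.sqrt_nonneg _).posSemidef
  have htr : (CFC.sqrt A * K * CFC.sqrt B).trace
      = (CFC.sqrt P * (K * W) * CFC.sqrt P).trace := by
    calc (CFC.sqrt A * K * CFC.sqrt B).trace = (K * T).trace := by
          rw [trace_mul_cycle, trace_mul_comm]
      _ = (K * W * (CFC.sqrt P * CFC.sqrt P)).trace := by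
          rw [CFC.sqrt_mul_sqrt_self P hP.nonneg, Matrix.mul_assoc, hWT]
      _ = (CFC.sqrt P * (K * W) * CFC.sqrt P).trace := by
          rw [← Matrix.mul_assoc, trace_mul_cycle]
  have hKW : ‖K * W‖ ≤ 1 :=
    (l2_opNorm_mul K W).trans (by nlinarith [norm_nonneg K, norm_nonneg W])
  have := (posSemidef_fromBlocks_sqrt_mul_mul_sqrt hP hP hKW).two_mul_re_trace_le
  rw [fidelity_eq_re_trace_sqrt hA hB, htr]
  linarith

theorem exists_norm_le_one_re_trace_sqrt_mul_mul_sqrt_eq_fidelity {A B : Matrix l l ℂ}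
    (hA : A.PosSemidef) (hB : B.PosSemidef) :
    ∃ K : Matrix l l ℂ, ‖K‖ ≤ 1 ∧ (CFC.sqrt A * K * CFC.sqrt B).trace.re = fidelity A B := by
  obtain ⟨W, hW, hWT, hWW⟩ := exists_polar_decomposition (CFC.sqrt B * CFC.sqrt A)
  refine ⟨Wᴴ, by rwa [l2_opNorm_conjTranspose], ?_⟩
  rw [trace_mul_cycle, trace_mul_comm, ← hWT, ← Matrix.mul_assoc, hWW,
    fidelity_eq_re_trace_sqrt hA hB]

theorem Matrix.PosSemidef.re_trace_le_fidelity {A B X : Matrix l l ℂ}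
    (h : (fromBlocks A X Xᴴ B).PosSemidef) : X.trace.re ≤ fidelity A B := by
  obtain ⟨K, hK, rfl⟩ := h.exists_eq_sqrt_mul_mul_sqrt
  exact re_trace_sqrt_mul_mul_sqrt_le_fidelity (h.submatrix Sum.inl) (h.submatrix Sum.inr) hK

theorem exists_posSemidef_fromBlocks_re_trace_eq_fidelity {A B : Matrix l l ℂ}
    (hA : A.PosSemidef) (hB : B.PosSemidef) :
    ∃ X, (fromBlocks A X Xᴴ B).PosSemidef ∧ X.trace.re = fidelity A B := by
  obtain ⟨K, hK, hKF⟩ := exists_norm_le_one_re_trace_sqrt_mul_mul_sqrt_eq_fidelity hA hB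
  exact ⟨_, posSemidef_fromBlocks_sqrt_mul_mul_sqrt hA hB hK, hKF⟩

end Fidelity

section PartialTrace

variable {m n : Type*} [Fintype m] [Fintype n]

theorem fromBlocks_ptraceRight_eq_sum (A B C D : Matrix (m × n) (m × n) ℂ) :
    fromBlocks (ptraceRight A) (ptraceRight B) (ptraceRight C) (ptraceRight D) =
      ∑ j : n, (fromBlocks A B C D).submatrix (Sum.map (·, j) (·, j)) (Sum.map (·, j) (·, j)) := by
  ext (i | i) (k | k) <;> simp [ptraceRight, Matrix.sum_apply]

theorem Matrix.PosSemidef.fromBlocks_ptraceRight {A B C D : Matrix (m × n) (m × n) ℂ}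
    (h : (fromBlocks A B C D).PosSemidef) :
    (fromBlocks (ptraceRight A) (ptraceRight B) (ptraceRight C) (ptraceRight D)).PosSemidef := by
  rw [fromBlocks_ptraceRight_eq_sum]
  exact posSemidef_sum _ fun j _ => h.submatrix _

theorem conjTranspose_ptraceRight (A : Matrix (m × n) (m × n) ℂ) :
    (ptraceRight A)ᴴ = ptraceRight Aᴴ := by
  ext i k
  simp [ptraceRight, star_sum]

theorem trace_ptraceRight (A : Matrix (m × n) (m × n) ℂ) : (ptraceRight A).trace = A.trace := by
  simp [ptraceRight, Matrix.trace, Fintype.sum_prod_type]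

end PartialTrace

theorem fidelity_le_fidelity_ptrace_general
    {m n : Type*} [Fintype m] [Fintype n] [DecidableEq m] [DecidableEq n]
    (ρ0 ρ1 : Matrix (m × n) (m × n) ℂ)
    (h0 : ρ0.PosSemidef)
    (h1 : ρ1.PosSemidef) :
    fidelity ρ0 ρ1 ≤ fidelity (ptraceRight ρ0) (ptraceRight ρ1) := by
  obtain ⟨X, hX, hXF⟩ := exists_posSemidef_fromBlocks_re_trace_eq_fidelity h0 h1
  have hpX := hX.fromBlocks_ptraceRight
  rw [← conjTranspose_ptraceRight] at hpX
  rw [← hXF, ← trace_ptraceRight]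
  exact hpX.re_trace_le_fidelity

/-- Monotonicity of fidelity under partial trace. -/
theorem fidelity_le_fidelity_ptrace
    {m n : Type*} [Fintype m] [Fintype n] [DecidableEq m] [DecidableEq n]
    (ρ0 ρ1 : Matrix (m × n) (m × n) ℂ)
    (h0 : ρ0.PosSemidef) (h0t : ρ0.trace = 1)
    (h1 : ρ1.PosSemidef) (h1t : ρ1.trace = 1) :
    fidelity ρ0 ρ1 ≤ fidelity (ptraceRight ρ0) (ptraceRight ρ1) :=
  fidelity_le_fidelity_ptrace_general ρ0 ρ1 h0 h1
end
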